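/- arXiv:2206.15281 — 3 statements merged into one kernel-verified Lean document; each statement's English description precedes it below -/
import Mathlib

section
/- π³ = (125/4)·((3-φ)^{3/2}/φ)·Σ_{n=-∞}^{∞} 1/(1-5n)³, where φ = (1+√5)/2 and the sum is over all integers n, interpreted as the limit of symmetric partial sums. -/
/-!
The Fourier series of the Bernoulli polynomial `B₃` gives, for `x ∈ [0, 1]`,
`∑_{n ≥ 1} sin (2πnx) / n³ = π³ x (1 - x) (1 - 2x) / 3`.
The function `χ` on `ℕ` equal to `1` on `n ≡ 1`, `-1` on `n ≡ 4` and `0` otherwise mod 5 is,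
by finite Fourier analysis on `ℤ/5ℤ`, the combination
`(4/5) (sin (2π/5) sin (2πn/5) + sin (4π/5) sin (4πn/5))`; evaluating the series at `x = 1/5`
and `x = 2/5` therefore gives
`∑_{n ∈ ℤ} 1 / (1 - 5n)³ = ∑_{n ≥ 1} χ(n) / n³ = π³ cos (π/5) / (125 sin³ (π/5))`.
Finally `2 cos (π/5) = φ` and `4 sin² (π/5) = 3 - φ`.
-/

open Real Filter
open scoped goldenRatio

theorem Polynomial.bernoulli_three :
    Polynomial.bernoulli 3 = X ^ 3 - C (3 / 2 : ℚ) * X ^ 2 + C (1 / 2 : ℚ) * X := by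
  refine Polynomial.funext fun x => ?_
  simp only [Polynomial.bernoulli, Finset.sum_range_succ, Finset.sum_range_zero, eval_add,
    eval_sub, eval_mul, eval_pow, eval_X, eval_C, eval_zero, eval_monomial]
  norm_num [bernoulli_eq_bernoulli'_of_ne_one, Nat.choose]
  ring

theorem hasSum_one_div_nat_pow_three_mul_sin {x : ℝ} (hx : x ∈ Set.Icc 0 1) :
    HasSum (fun n : ℕ => 1 / (n : ℝ) ^ 3 * sin (2 * π * n * x))
      (π ^ 3 * x * (1 - x) * (1 - 2 * x) / 3) := by
  convert hasSum_one_div_nat_pow_mul_sin (k := 1) one_ne_zero hx using 1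
  simp only [Nat.reduceMul, Nat.reduceAdd, Polynomial.bernoulli_three, Polynomial.map_add,
    Polynomial.map_sub, Polynomial.map_mul, Polynomial.map_pow, Polynomial.map_X,
    Polynomial.map_C, Polynomial.eval_add, Polynomial.eval_sub, Polynomial.eval_mul,
    Polynomial.eval_pow, Polynomial.eval_X, Polynomial.eval_C]
  norm_num [Nat.factorial]
  ring

theorem two_mul_cos_pi_div_five : 2 * cos (π / 5) = φ := by
  rw [cos_pi_div_five]
  ring

theorem four_mul_sin_sq_pi_div_five : 4 * sin (π / 5) ^ 2 = 3 - φ := by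
  rw [sin_sq, cos_pi_div_five]
  linear_combination (-1 / 4 : ℝ) * sq_sqrt (show (0 : ℝ) ≤ 5 by norm_num)

theorem sin_pi_div_five_pos : 0 < sin (π / 5) :=
  sin_pos_of_pos_of_lt_pi (by positivity) (by linarith [pi_pos])

theorem sin_two_pi_div_five : sin (2 * π / 5) = 2 * sin (π / 5) * cos (π / 5) := by
  rw [← sin_two_mul]
  ring_nf

theorem sin_four_pi_div_five : sin (4 * π / 5) = sin (π / 5) := by
  rw [← sin_pi_sub]
  ring_nf

theorem sin_sq_two_pi_div_five_add_sin_sq_four_pi_div_five :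
    sin (2 * π / 5) ^ 2 + sin (4 * π / 5) ^ 2 = 5 / 4 := by
  rw [sin_two_pi_div_five, sin_four_pi_div_five]
  linear_combination (4 * cos (π / 5) ^ 2 + 1) / 4 * four_mul_sin_sq_pi_div_five
    + (3 - φ) / 4 * (2 * cos (π / 5) + φ) * two_mul_cos_pi_div_five
    + (2 - φ) / 4 * goldenRatio_sq

theorem three_sub_goldenRatio_rpow_three_halves :
    (3 - φ) ^ ((3 : ℝ) / 2) = (2 * sin (π / 5)) ^ 3 := by
  rw [← four_mul_sin_sq_pi_div_five, show 4 * sin (π / 5) ^ 2 = (2 * sin (π / 5)) ^ 2 by ring,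
    ← rpow_natCast, ← rpow_mul (by linarith [sin_pi_div_five_pos])]
  norm_num

def chiFive (n : ℕ) : ℝ :=
  if n % 5 = 1 then 1 else if n % 5 = 4 then -1 else 0

theorem chiFive_eq_sum_sin (n : ℕ) :
    chiFive n = 4 / 5 * (sin (2 * π / 5) * sin (2 * π * n * (1 / 5))
      + sin (4 * π / 5) * sin (2 * π * n * (2 / 5))) := by
  have hperiodic : Function.Periodic (fun n : ℕ => 4 / 5 * (sin (2 * π / 5) *
      sin (2 * π * n * (1 / 5)) + sin (4 * π / 5) * sin (2 * π * n * (2 / 5)))) 5 := by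
    intro n
    simp only [Nat.cast_add, Nat.cast_ofNat]
    rw [show 2 * π * (n + 5) * (1 / 5) = 2 * π * n * (1 / 5) + 2 * π by ring,
      show 2 * π * (n + 5) * (2 / 5) = 2 * π * n * (2 / 5) + 2 * π + 2 * π by ring]
    simp only [sin_add_two_pi]
  have hsum := sin_sq_two_pi_div_five_add_sin_sq_four_pi_div_five
  rw [← hperiodic.map_mod_nat, chiFive]
  have h5 := Nat.mod_lt n (show 5 > 0 by norm_num)
  interval_cases n % 5 <;> norm_num
  · rw [show 2 * π * (1 / 5) = 2 * π / 5 by ring, show 2 * π * (2 / 5) = 4 * π / 5 by ring]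
    linear_combination (-4 / 5) * hsum
  · rw [show 2 * π * 2 * (1 / 5) = 4 * π / 5 by ring,
      show 2 * π * 2 * (2 / 5) = 2 * π - 2 * π / 5 by ring, sin_two_pi_sub]
    ring
  · rw [show 2 * π * 3 * (1 / 5) = 2 * π - 4 * π / 5 by ring,
      show 2 * π * 3 * (2 / 5) = 2 * π / 5 + 2 * π by ring, sin_two_pi_sub, sin_add_two_pi]
    ring
  · rw [show 2 * π * 4 * (1 / 5) = 2 * π - 2 * π / 5 by ring,
      show 2 * π * 4 * (2 / 5) = 2 * π - 4 * π / 5 + 2 * π by ring, sin_add_two_pi,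
      sin_two_pi_sub, sin_two_pi_sub]
    linear_combination (4 / 5) * hsum

theorem hasSum_chiFive_div_pow_three :
    HasSum (fun n : ℕ => chiFive n / (n : ℝ) ^ 3)
      (π ^ 3 * cos (π / 5) / (125 * sin (π / 5) ^ 3)) := by
  have h1 := hasSum_one_div_nat_pow_three_mul_sin (x := 1 / 5) (by norm_num)
  have h2 := hasSum_one_div_nat_pow_three_mul_sin (x := 2 / 5) (by norm_num)
  have hsum := (h1.mul_left (4 / 5 * sin (2 * π / 5))).add (h2.mul_left (4 / 5 * sin (4 * π / 5)))
  have hterm : (fun n : ℕ => chiFive n / (n : ℝ) ^ 3) = fun n : ℕ =>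
      4 / 5 * sin (2 * π / 5) * (1 / (n : ℝ) ^ 3 * sin (2 * π * n * (1 / 5)))
        + 4 / 5 * sin (4 * π / 5) * (1 / (n : ℝ) ^ 3 * sin (2 * π * n * (2 / 5))) := by
    funext n
    rw [chiFive_eq_sum_sin]
    ring
  have hvalue : π ^ 3 * cos (π / 5) / (125 * sin (π / 5) ^ 3) =
      4 / 5 * sin (2 * π / 5) * (π ^ 3 * (1 / 5) * (1 - 1 / 5) * (1 - 2 * (1 / 5)) / 3)
        + 4 / 5 * sin (4 * π / 5) * (π ^ 3 * (2 / 5) * (1 - 2 / 5) * (1 - 2 * (2 / 5)) / 3) := by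
    have key : 8 * sin (π / 5) ^ 4 * (4 * cos (π / 5) + 1) = 5 * cos (π / 5) := by
      linear_combination (1 / 2) * (4 * sin (π / 5) ^ 2 + 3 - φ) * (4 * cos (π / 5) + 1)
          * four_mul_sin_sq_pi_div_five
        + ((3 - φ) ^ 2 - 5 / 2) * two_mul_cos_pi_div_five + (2 * φ - 9) / 2 * goldenRatio_sq
    have hsin := sin_pi_div_five_pos.ne'
    rw [sin_two_pi_div_five, sin_four_pi_div_five]
    field_simp
    linear_combination (-375) * key
  rw [hterm, hvalue]
  exact hsum

theorem chiFive_eq_zero_of_notMem_range {m : ℕ}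
    (hm : m ∉ Set.range fun n : ℤ => (1 - 5 * n).natAbs) : chiFive m = 0 := by
  rw [chiFive]
  split_ifs with h1 h4
  · exact absurd ⟨-(m / 5 : ℕ), by dsimp only; omega⟩ hm
  · exact absurd ⟨(m / 5 : ℕ) + 1, by dsimp only; omega⟩ hm
  · rfl

theorem chiFive_natAbs_one_sub_five_mul_div (n : ℤ) :
    chiFive (1 - 5 * n).natAbs / ((1 - 5 * n).natAbs : ℝ) ^ 3 = 1 / (1 - 5 * n : ℝ) ^ 3 := by
  rw [Nat.cast_natAbs, chiFive]
  push_cast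
  rcases le_or_gt n 0 with hn | hn
  · have : (n : ℝ) ≤ 0 := by exact_mod_cast hn
    rw [if_pos (by omega), abs_of_nonneg (by linarith)]
  · have : (1 : ℝ) ≤ n := by exact_mod_cast hn
    rw [if_neg (by omega), if_pos (by omega), abs_of_neg (by linarith), Odd.neg_pow (by decide),
      div_neg, neg_div, neg_neg]

theorem hasSum_one_div_one_sub_five_mul_pow_three :
    HasSum (fun n : ℤ => 1 / (1 - 5 * n : ℝ) ^ 3)
      (π ^ 3 * cos (π / 5) / (125 * sin (π / 5) ^ 3)) := by
  have hinj : Function.Injective fun n : ℤ => (1 - 5 * n).natAbs := by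
    intro a b h
    dsimp only at h
    omega
  have := (hinj.hasSum_iff fun m hm => by rw [chiFive_eq_zero_of_notMem_range hm, zero_div]).2
    hasSum_chiFive_div_pow_three
  simpa only [Function.comp_def, chiFive_natAbs_one_sub_five_mul_div] using this

theorem pi_cubed_golden_five :
    ∃ S : ℝ,
      Tendsto (fun N : ℕ => ∑ n ∈ Finset.Icc (-(N : ℤ)) (N : ℤ), 1 / ((1 : ℝ) - 5 * n) ^ 3)
        atTop (nhds S) ∧
      π ^ 3 = (125 / 4) *
        ((3 - (1 + Real.sqrt 5) / 2) ^ ((3 : ℝ) / 2) / ((1 + Real.sqrt 5) / 2)) * S := by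
  refine ⟨_, hasSum_one_div_one_sub_five_mul_pow_three.comp Finset.tendsto_Icc_neg, ?_⟩
  change π ^ 3 = 125 / 4 * ((3 - φ) ^ ((3 : ℝ) / 2) / φ) * _
  rw [three_sub_goldenRatio_rpow_three_halves, ← two_mul_cos_pi_div_five]
  have hsin := sin_pi_div_five_pos.ne'
  have hcos : cos (π / 5) ≠ 0 :=
    (cos_pos_of_mem_Ioo ⟨by linarith [pi_pos], by linarith [pi_pos]⟩).ne'
  field_simp
  ring
end

section
/- π³ = 32·Σ_{n=-∞}^{∞} 1/(1-4n)³, where the sum over all integers n is interpreted as the limit of symmetric partial sums. -/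
/-!
The coefficient `sin (π m / 2)` vanishes for even `m`, and `x ↦ sin (π x / 2) / x³` is even, so
`1 / (1 - 4n)³ = sin (π m / 2) / m³` at `m = |1 - 4n|`. As `n ↦ |1 - 4n|` is a bijection from `ℤ`
onto the odd naturals, the bilateral series is the absolutely convergent series
`∑ sin (π m / 2) / m³ = π³ / 32` with its zero terms removed, so its symmetric partial sums
converge to `π³ / 32`.
-/

open Real Filter SummationFilter

lemma injective_natAbs_one_sub_four_mul : Function.Injective fun n : ℤ => (1 - 4 * n).natAbs := by
  intro a b h
  simp only [Int.natAbs_eq_natAbs_iff] at h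
  omega

lemma exists_natAbs_one_sub_four_mul_eq {m : ℕ} (hm : Odd m) :
    ∃ n : ℤ, (1 - 4 * n).natAbs = m := by
  obtain ⟨k, rfl⟩ := hm
  rcases Nat.even_or_odd k with ⟨j, rfl⟩ | ⟨j, rfl⟩
  · exact ⟨-j, by omega⟩
  · exact ⟨j + 1, by omega⟩

lemma sin_pi_mul_div_two_of_even {m : ℕ} (hm : Even m) : sin (π * m / 2) = 0 := by
  obtain ⟨k, rfl⟩ := hm
  rw [show π * ↑(k + k) / 2 = k * π by push_cast; ring]
  exact sin_nat_mul_pi k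

lemma sin_pi_mul_one_sub_four_mul_div_two (n : ℤ) : sin (π * (1 - 4 * n) / 2) = 1 := by
  rw [show π * (1 - 4 * n) / 2 = π / 2 + (-n : ℤ) * (2 * π) by push_cast; ring,
    sin_add_int_mul_two_pi, sin_pi_div_two]

lemma one_div_abs_pow_mul_sin_pi_mul_abs_div_two {k : ℕ} (hk : Odd k) (x : ℝ) :
    1 / |x| ^ k * sin (π * |x| / 2) = 1 / x ^ k * sin (π * x / 2) := by
  rcases abs_cases x with ⟨h, -⟩ | ⟨h, -⟩ <;> rw [h]
  rw [mul_neg, neg_div, sin_neg, hk.neg_pow, div_neg, neg_mul_neg]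

theorem hasSum_one_div_one_sub_four_mul_pow_three :
    HasSum (fun n : ℤ => 1 / ((1 : ℝ) - 4 * n) ^ 3) (π ^ 3 / 32) := by
  set e : ℤ → ℕ := fun n => (1 - 4 * n).natAbs
  have hterm (n : ℤ) : 1 / (e n : ℝ) ^ 3 * sin (π * e n / 2) = 1 / ((1 : ℝ) - 4 * n) ^ 3 := by
    simp only [e, Nat.cast_natAbs, Int.cast_abs, Int.cast_sub, Int.cast_one, Int.cast_mul,
      Int.cast_ofNat]
    rw [one_div_abs_pow_mul_sin_pi_mul_abs_div_two (by decide),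
      sin_pi_mul_one_sub_four_mul_div_two, mul_one]
  have hzero (m : ℕ) (hm : m ∉ Set.range e) : 1 / (m : ℝ) ^ 3 * sin (π * m / 2) = 0 := by
    have hm_even : Even m := Nat.not_odd_iff_even.mp fun hodd =>
      hm (exists_natAbs_one_sub_four_mul_eq hodd)
    rw [sin_pi_mul_div_two_of_even hm_even, mul_zero]
  have hcomp := (injective_natAbs_one_sub_four_mul.hasSum_iff hzero).mpr
    hasSum_L_function_mod_four_eval_three
  convert hcomp using 1
  exact (funext hterm).symm

theorem pi_cubed_four :
    ∃ S : ℝ,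
      Tendsto (fun N : ℕ => ∑ n ∈ Finset.Icc (-(N : ℤ)) (N : ℤ), 1 / ((1 : ℝ) - 4 * n) ^ 3)
        atTop (nhds S) ∧
      π ^ 3 = 32 * S :=
  ⟨π ^ 3 / 32,
    hasSum_symmetricIcc_iff.mp
      (hasSum_one_div_one_sub_four_mul_pow_three.mono_left (symmetricIcc ℤ).le_atTop),
    by ring⟩
end

section
/- π³ = 32·Σ_{k=0}^{∞} (-1)^k/(2k+1)³. -/
open Real

theorem pi_cubed_alternating :
    π ^ 3 = 32 * ∑' k : ℕ, (-1 : ℝ) ^ k / (2 * k + 1) ^ 3 := by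
  have h := hasSum_one_div_nat_pow_mul_sin (k := 1) one_ne_zero
    (x := 1/4) ⟨by norm_num, by norm_num⟩
  set f : ℕ → ℝ := fun n : ℕ => 1 / (n : ℝ) ^ (2 * 1 + 1) * Real.sin (2 * π * n * (1/4)) with hf
  have hval : ((-1 : ℝ) ^ (1 + 1) * (2 * π) ^ (2 * 1 + 1) / 2 / ((2 * 1 + 1).factorial : ℝ) *
      (Polynomial.map (algebraMap ℚ ℝ) (Polynomial.bernoulli (2 * 1 + 1))).eval (1/4 : ℝ))
      = π ^ 3 / 32 := by
    have : ((Polynomial.bernoulli 3).map (algebraMap ℚ ℝ)).eval (1/4 : ℝ) = 3/64 := by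
      simp [Polynomial.bernoulli, Finset.sum_range_succ, Polynomial.bernoulli_def,
        bernoulli, bernoulli'_two, bernoulli'_three]
      norm_num
    norm_num [this, Nat.factorial]
    ring
  rw [hval] at h
  have hinj : Function.Injective (fun k : ℕ => 2 * k + 1) := fun a b hab => by simpa using hab
  have hzero : ∀ n ∉ Set.range (fun k : ℕ => 2 * k + 1), f n = 0 := by
    intro n hn
    obtain ⟨m, rfl⟩ : ∃ m, n = 2 * m := by
      rcases Nat.even_or_odd n with ⟨m, hm⟩ | ⟨m, hm⟩
      · exact ⟨m, by omega⟩
      · exact absurd ⟨m, show 2 * m + 1 = n from hm.symm⟩ hn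
    have : Real.sin (2 * π * (2 * m : ℕ) * (1/4)) = 0 := by
      rw [show 2 * π * ((2 * m : ℕ) : ℝ) * (1/4) = m * π by push_cast; ring]
      exact Real.sin_nat_mul_pi m
    simp only [hf]
    rw [this, mul_zero]
  have h3 : HasSum (f ∘ fun k : ℕ => 2 * k + 1) (π ^ 3 / 32) :=
    (hinj.hasSum_iff hzero).mpr h
  have heq : (f ∘ fun k : ℕ => 2 * k + 1) = fun k : ℕ => (-1 : ℝ) ^ k / (2 * k + 1) ^ 3 := by
    funext k
    have hsin : Real.sin (2 * π * ((2 * k + 1 : ℕ) : ℝ) * (1/4)) = (-1) ^ k := by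
      rw [show 2 * π * ((2 * k + 1 : ℕ) : ℝ) * (1/4) = π / 2 + k * π by push_cast; ring]
      rw [Real.sin_add_nat_mul_pi, Real.sin_pi_div_two, mul_one]
    simp only [Function.comp, hf, hsin]
    push_cast
    ring
  rw [heq] at h3
  rw [h3.tsum_eq]
  ring
end
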